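/- arXiv:1412.6659 — 7 statements merged into one kernel-verified Lean document; each statement's English description precedes it below -/
import Mathlib

section
/- If E is an equivalence relation on X, then sequences (x_n) and (y_n) in X^ω satisfy both (x_n) E^inj (y_n) and (y_n) E^inj (x_n) if and only if there is a bijection f : ω → ω with x_n E y_{f(n)} for all n. -/
/-- For an equivalence relation `E`, `(x_n) E^inj (y_n)` and `(y_n) E^inj (x_n)`
hold simultaneously iff there is a bijection `f : ω → ω` with `x_n E y_{f(n)}`. -/
theorem stmt_6 {X : Type*} (E : X → X → Prop) (hE : Equivalence E)
    (x y : ℕ → X) :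
    ((∃ f : ℕ → ℕ, Function.Injective f ∧ ∀ n, E (x n) (y (f n))) ∧
      (∃ g : ℕ → ℕ, Function.Injective g ∧ ∀ n, E (y n) (x (g n)))) ↔
    (∃ f : ℕ → ℕ, Function.Bijective f ∧ ∀ n, E (x n) (y (f n))) := by
  constructor
  · rintro ⟨⟨f, hf, hfE⟩, ⟨g, hg, hgE⟩⟩
    exact Function.Embedding.schroeder_bernstein_of_rel hf hg (fun m n ↦ E (x m) (y n)) hfE
      fun n ↦ hE.symm (hgE n)
  · rintro ⟨f, hf, hfE⟩
    let e := Equiv.ofBijective f hf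
    refine ⟨⟨f, hf.injective, hfE⟩, e.symm, e.symm.injective, fun n ↦ hE.symm ?_⟩
    simpa only [e, Equiv.ofBijective_apply_symm_apply] using hfE (e.symm n)
end

section
/- For a quasi-order S on X and sequences with the derived sets I_α: for all countable ordinals α and all n ∈ I_α(a), if a_m S a_n then m ∈ I_α(a). Moreover if n ∈ I^∞(a) := ⋂_α I_α(a) then there exist infinitely many m ∈ I^∞(a) with a_n S a_m. -/
/-!
The sets `I_α(a)` decrease, and once `I_{γ+1}(a) = I_γ(a)` they are constant from `γ` on.
Before that happens every step removes a natural number, and different steps remove different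
numbers, so the sequence stabilises at some countable `γ`; then `I^∞(a) = I_γ(a) = I_{γ+1}(a)`,
which is the second claim. Downward closure under `S` passes through successor stages by
transitivity of `S` and through limit stages trivially.
-/

open Ordinal Cardinal Set

universe u v w

/-- The derived sets `I_α(a)`: `I_0 = ω`, `I_{α+1}(a)` consists of the `n ∈ I_α(a)`
whose upper cone in `I_α(a)` is infinite, and intersections at limits. -/
noncomputable def Iset {X : Type*} (S : X → X → Prop) (a : ℕ → X) (α : Ordinal) : Set ℕ :=
  Ordinal.limitRecOn α
    Set.univ
    (fun _ A => {n ∈ A | {m ∈ A | S (a n) (a m)}.Infinite})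
    (fun o _ IH => ⋂ (β : Ordinal) (h : β < o), IH β h)

theorem uncountable_Iio_ord_aleph_one : Uncountable (Iio (aleph 1).ord : Set Ordinal.{u}) := by
  rw [← aleph0_lt_mk_iff, Cardinal.mk_Iio_ordinal, card_ord, ← lift_aleph0.{u + 1, u},
    Cardinal.lift_lt]
  exact aleph0_lt_aleph_one

section Iset

variable {X : Type u} (S : X → X → Prop) (a : ℕ → X)

theorem Iset_zero : Iset S a 0 = Set.univ := limitRecOn_zero _ _ _

theorem Iset_add_one (α : Ordinal) :
    Iset S a (α + 1) = {n ∈ Iset S a α | {m ∈ Iset S a α | S (a n) (a m)}.Infinite} :=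
  limitRecOn_add_one _ _ _ _

theorem Iset_of_isSuccLimit {α : Ordinal} (hα : Order.IsSuccLimit α) :
    Iset S a α = ⋂ (β : Ordinal) (_ : β < α), Iset S a β :=
  limitRecOn_limit _ _ _ _ hα

theorem Iset_add_one_subset (α : Ordinal) : Iset S a (α + 1) ⊆ Iset S a α := by
  rw [Iset_add_one]
  exact fun _ hn => hn.1

theorem Iset_antitone : Antitone (Iset S a) := by
  intro α β
  induction β using Ordinal.limitRecOn with
  | zero => intro hα; rw [nonpos_iff_eq_zero.mp hα]
  | add_one β IH =>
    intro hα
    rcases hα.eq_or_lt with rfl | hlt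
    · rfl
    · exact (Iset_add_one_subset S a β).trans (IH (Order.lt_add_one_iff.mp hlt))
  | limit β hβ _ =>
    intro hα
    rcases hα.eq_or_lt with rfl | hlt
    · rfl
    · rw [Iset_of_isSuccLimit S a hβ]
      exact iInter₂_subset α hlt

theorem mem_Iset_of_rel (htrans : ∀ x y z, S x y → S y z → S x z) (α : Ordinal) :
    ∀ n ∈ Iset S a α, ∀ m, S (a m) (a n) → m ∈ Iset S a α := by
  induction α using Ordinal.limitRecOn with
  | zero => intro _ _ m _; rw [Iset_zero]; trivial
  | add_one α IH =>
    intro n hn m hmn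
    rw [Iset_add_one] at hn ⊢
    exact ⟨IH n hn.1 m hmn, hn.2.mono fun k hk => ⟨hk.1, htrans _ _ _ hmn hk.2⟩⟩
  | limit α hα IH =>
    intro n hn m hmn
    rw [Iset_of_isSuccLimit S a hα, mem_iInter₂] at hn ⊢
    exact fun β hβ => IH β hβ n (hn β hβ) m hmn

theorem Iset_lift (α : Ordinal.{v}) : Iset S a (Ordinal.lift.{w} α) = Iset S a α := by
  induction α using Ordinal.limitRecOn with
  | zero => rw [Ordinal.lift_zero, Iset_zero, Iset_zero]
  | add_one α IH => rw [lift_add_one, Iset_add_one, Iset_add_one, IH]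
  | limit α hα IH =>
    rw [Iset_of_isSuccLimit S a (isSuccLimit_lift.mpr hα), Iset_of_isSuccLimit S a hα]
    apply subset_antisymm
    · refine subset_iInter₂ fun β hβ => ?_
      rw [← IH β hβ]
      exact iInter₂_subset (Ordinal.lift.{w} β) (by rwa [Ordinal.lift_lt])
    · refine subset_iInter₂ fun β hβ => ?_
      obtain ⟨γ, hγ, rfl⟩ := Ordinal.lt_lift_iff.mp hβ
      rw [IH γ hγ]
      exact iInter₂_subset γ hγ

theorem Iset_eq_of_add_one_eq {α β : Ordinal} (hα : Iset S a (α + 1) = Iset S a α) (hαβ : α ≤ β) :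
    Iset S a β = Iset S a α := by
  induction β using Ordinal.limitRecOn with
  | zero => rw [nonpos_iff_eq_zero.mp hαβ]
  | add_one β IH =>
    rcases hαβ.eq_or_lt with rfl | hlt
    · rfl
    · have hαβ := Order.lt_add_one_iff.mp hlt
      rw [Iset_add_one, IH hαβ, ← Iset_add_one, hα]
  | limit β hβ IH =>
    refine (Iset_antitone S a hαβ).antisymm ?_
    rw [Iset_of_isSuccLimit S a hβ]
    refine subset_iInter₂ fun γ hγ => ?_
    rcases le_total α γ with hαγ | hγα
    · exact (IH γ hγ hαγ).symm.subset
    · exact Iset_antitone S a hγα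

theorem exists_Iset_add_one_eq :
    ∃ γ : Ordinal.{v}, γ < (aleph 1).ord ∧ Iset S a (γ + 1) = Iset S a γ := by
  by_contra! hne
  have hdrop : ∀ α : Iio (aleph 1).ord, ∃ n ∈ Iset S a α, n ∉ Iset S a (α + 1) := fun α =>
    not_subset.mp fun hsub => hne α α.2 ((Iset_add_one_subset S a α).antisymm hsub)
  choose g hg hg' using hdrop
  have hinj : Function.Injective g := Function.Injective.of_lt_imp_ne fun α β hαβ hgαβ =>
    hg' α (hgαβ ▸ Iset_antitone S a (Order.add_one_le_of_lt hαβ) (hg β))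
  exact uncountable_Iio_ord_aleph_one.not_countable hinj.countable

theorem iInter_Iset_eq_of_add_one_eq {γ : Ordinal.{w}} (hγ : γ < (aleph 1).ord)
    (hstable : Iset S a (γ + 1) = Iset S a γ) :
    ⋂ (α : Ordinal.{max w v}) (_ : α < (aleph 1).ord), Iset S a α = Iset S a γ := by
  have hlift : Ordinal.lift.{v} γ < (aleph 1).ord := by
    rwa [ord_aleph, lift_lt_omega_one, ← ord_aleph]
  have hstable' : Iset S a (Ordinal.lift.{v} γ + 1) = Iset S a (Ordinal.lift.{v} γ) := by
    rw [← lift_add_one, Iset_lift, Iset_lift, hstable]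
  rw [← Iset_lift.{u, w, v} S a γ]
  refine (iInter₂_subset (Ordinal.lift.{v} γ) hlift).antisymm (subset_iInter₂ fun α _ => ?_)
  rcases le_total (Ordinal.lift.{v} γ) α with hγα | hαγ
  · exact (Iset_eq_of_add_one_eq S a hstable' hγα).symm.subset
  · exact Iset_antitone S a hαγ

end Iset

theorem stmt_8_general {X : Type*} (S : X → X → Prop)
    (htrans : ∀ x y z, S x y → S y z → S x z)
    (a : ℕ → X) :
    (∀ α : Ordinal, α < (Cardinal.aleph 1).ord →
      ∀ n ∈ Iset S a α, ∀ m : ℕ, S (a m) (a n) → m ∈ Iset S a α) ∧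
    (∀ n ∈ ⋂ (α : Ordinal) (_ : α < (Cardinal.aleph 1).ord), Iset S a α,
      {m ∈ ⋂ (α : Ordinal) (_ : α < (Cardinal.aleph 1).ord), Iset S a α |
        S (a n) (a m)}.Infinite) := by
  refine ⟨fun α _ => mem_Iset_of_rel S a htrans α, fun n hn => ?_⟩
  -- The two intersections range over ordinals of unrelated universes; a stage in universe 0
  -- lifts to both.
  obtain ⟨γ, hγ, hstable⟩ := exists_Iset_add_one_eq.{_, 0} S a
  simp only [iInter_Iset_eq_of_add_one_eq S a hγ hstable] at hn ⊢
  rw [← hstable, Iset_add_one] at hn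
  exact hn.2

/-- The sets `I_α(a)` are downward closed under `S`, and every `n ∈ I^∞(a)` has
infinitely many `m ∈ I^∞(a)` with `a_n S a_m`. -/
theorem stmt_8 {X : Type*} (S : X → X → Prop)
    (hrefl : ∀ x, S x x) (htrans : ∀ x y z, S x y → S y z → S x z)
    (a : ℕ → X) :
    (∀ α : Ordinal, α < (Cardinal.aleph 1).ord →
      ∀ n ∈ Iset S a α, ∀ m : ℕ, S (a m) (a n) → m ∈ Iset S a α) ∧
    (∀ n ∈ ⋂ (α : Ordinal) (_ : α < (Cardinal.aleph 1).ord), Iset S a α,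
      {m ∈ ⋂ (α : Ordinal) (_ : α < (Cardinal.aleph 1).ord), Iset S a α |
        S (a n) (a m)}.Infinite) :=
  stmt_8_general S htrans a
end

section
/- Let S be a wqo on ω and x, y ∈ ω^ω. Let K_y = {n : the set {m : y_n S y_m} is infinite} and K_{x,y} = {n : ∃ m ∈ K_y, x_n S y_m}. Then there exists an injective function f : K_{x,y} → K_y such that x_n S y_{f(n)} for every n ∈ K_{x,y}. -/
/-!
By the wqo property, every infinite set `A` of indices contains some `a` whose upper cone
`{m ∈ A | y_a S y_m}` is again infinite. Applied to the cone of `x_n` with the indices of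
`K_y` removed, this shows that for `n ∈ K_{x,y}` infinitely many `m ∈ K_y` satisfy
`x_n S y_m`: otherwise the remaining infinite part of the cone would contain an index of `K_y`.
With infinitely many admissible targets for every `n`, they can be chosen strictly increasing
in `n`, hence injectively.
-/

open Filter Set

namespace WellQuasiOrdered

variable {α : Type*} {r : α → α → Prop} [IsPreorder α r]

theorem exists_mem_infinite_upperCone (hr : WellQuasiOrdered r) (f : ℕ → α) {A : Set ℕ}
    (hA : A.Infinite) : ∃ a ∈ A, {m ∈ A | r (f a) (f m)}.Infinite := by
  let e := hA.natEmbedding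
  obtain ⟨g, hg⟩ := hr.exists_monotone_subseq fun n ↦ f (e n)
  refine ⟨e (g 0), (e (g 0)).2, infinite_of_injective_forall_mem
    (f := fun n ↦ (e (g n) : ℕ)) ?_ fun n ↦ ⟨(e (g n)).2, hg 0 n n.zero_le⟩⟩
  exact Subtype.val_injective.comp (e.injective.comp g.injective)

theorem infinite_setOf_infinite_upperCone (hr : WellQuasiOrdered r) (f : ℕ → α) {b : α}
    (hb : {m | r b (f m)}.Infinite) :
    {m | r b (f m) ∧ {k | r (f m) (f k)}.Infinite}.Infinite := by
  by_contra hfin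
  obtain ⟨a, ⟨hba, ha⟩, hcone⟩ :=
    hr.exists_mem_infinite_upperCone f (hb.sdiff (not_infinite.mp hfin))
  exact ha ⟨hba, hcone.mono fun _ hm ↦ hm.2⟩

end WellQuasiOrdered

/-- For a wqo `S` on `ω`, there is an injection `f : K_{x,y} → K_y` with
`x_n S y_{f(n)}` for every `n ∈ K_{x,y}`. -/
theorem stmt_12 (S : ℕ → ℕ → Prop)
    (hrefl : ∀ x, S x x) (htrans : ∀ x y z, S x y → S y z → S x z)
    (hwqo : ∀ z : ℕ → ℕ, ∃ i j : ℕ, i < j ∧ S (z i) (z j))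
    (x y : ℕ → ℕ) :
    let Ky : Set ℕ := {n | {m : ℕ | S (y n) (y m)}.Infinite}
    let Kxy : Set ℕ := {n | ∃ m ∈ Ky, S (x n) (y m)}
    ∃ f : ℕ → ℕ, Set.InjOn f Kxy ∧ ∀ n ∈ Kxy, f n ∈ Ky ∧ S (x n) (y (f n)) := by
  intro Ky Kxy
  have : IsPreorder ℕ S := { refl := hrefl, trans := htrans }
  have htargets : ∀ n ∈ Kxy, {m | S (x n) (y m) ∧ m ∈ Ky}.Infinite := by
    rintro n ⟨m₀, hm₀, hxm₀⟩
    exact WellQuasiOrdered.infinite_setOf_infinite_upperCone hwqo y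
      (hm₀.mono fun m hm ↦ htrans _ _ _ hxm₀ hm)
  obtain ⟨f, hf, hfK⟩ := extraction_forall_of_frequently
    (P := fun n k ↦ n ∈ Kxy → k ∈ Ky ∧ S (x n) (y k)) fun n ↦ by
      by_cases hn : n ∈ Kxy
      · exact (Nat.frequently_atTop_iff_infinite.2 (htargets n hn)).mono
          fun _ hk _ ↦ hk.symm
      · exact Frequently.of_forall fun _ hn' ↦ absurd hn' hn
  exact ⟨f, hf.injective.injOn, hfK⟩
end

section
/- Let S be a wqo on ω, x, y ∈ ω^ω, K_y and K_{x,y} as above, and F_y = ω \ K_y (which is finite). Then x S^inj y if and only if there exists an injective g : ω \ K_{x,y} → F_y with x_n S y_{g(n)} for every n ∈ ω \ K_{x,y} (in particular ω \ K_{x,y} must be finite). -/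
/-!
Since `S` is a wqo, every sequence has an `S`-increasing subsequence, whose first term lies
below infinitely many others; hence `F_y` is finite. An injection witnessing `x S^inj y` must
send `ω \ K_{x,y}` into the finite set `F_y`, which gives the forward direction. Conversely,
for `n ∈ K_{x,y}` the set of `m ∈ K_y` with `x_n S y_m` is infinite (by transitivity it
contains the upper set of some `m₀ ∈ K_y`, minus the finite `F_y`), so these `n` can be matched
greedily and injectively into `K_y`, disjointly from the values of `g` in `F_y`.
-/

open Function Set

theorem Nat.exists_strictMono_forall_mem {I : ℕ → Set ℕ} (hI : ∀ n, (I n).Infinite) :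
    ∃ f : ℕ → ℕ, StrictMono f ∧ ∀ n, f n ∈ I n := by
  choose! next hnext_mem hlt_next using fun n => (hI n).exists_gt
  let f : ℕ → ℕ := fun n => Nat.rec (next 0 0) (fun k fk => next (k + 1) fk) n
  refine ⟨f, strictMono_nat_of_lt_succ fun n => hlt_next (n + 1) (f n), fun n => ?_⟩
  cases n with
  | zero => exact hnext_mem 0 0
  | succ n => exact hnext_mem (n + 1) (f n)

theorem WellQuasiOrdered.exists_strictMono_subseq {α : Type*} {r : α → α → Prop} [IsTrans α r]
    (h : WellQuasiOrdered r) (f : ℕ → α) :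
    ∃ g : ℕ ↪o ℕ, ∀ m n, m < n → r (f (g m)) (f (g n)) := by
  obtain ⟨g, hg | hg⟩ := exists_increasing_or_nonincreasing_subseq r f
  · exact ⟨g, hg⟩
  · obtain ⟨m, n, hmn, hr⟩ := h (f ∘ g)
    exact (hg m n hmn hr).elim

theorem WellQuasiOrdered.finite_setOf_finite_upper {α β : Type*} {r : α → α → Prop}
    [IsTrans α r] (h : WellQuasiOrdered r) (y : β → α) :
    {b | {c | r (y b) (y c)}.Finite}.Finite := by
  by_contra hinf
  let e := Set.Infinite.natEmbedding _ hinf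
  obtain ⟨g, hg⟩ := h.exists_strictMono_subseq fun n => y (e n)
  have hupper : range (fun n => (e (g (n + 1)) : β)) ⊆ {c | r (y (e (g 0))) (y c)} := by
    rintro _ ⟨n, rfl⟩
    exact hg 0 (n + 1) n.succ_pos
  refine infinite_range_of_injective (fun m n hmn => ?_) (Set.Finite.subset (e (g 0)).2 hupper)
  exact Nat.succ_injective (g.injective (e.injective (Subtype.val_injective hmn)))

theorem stmt_13_general (S : ℕ → ℕ → Prop)
    (htrans : ∀ x y z, S x y → S y z → S x z)
    (hwqo : ∀ z : ℕ → ℕ, ∃ i j : ℕ, i < j ∧ S (z i) (z j))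
    (x y : ℕ → ℕ) :
    let Ky : Set ℕ := {n | {m : ℕ | S (y n) (y m)}.Infinite}
    let Fy : Set ℕ := Kyᶜ
    let Kxy : Set ℕ := {n | ∃ m ∈ Ky, S (x n) (y m)}
    ((∃ h : ℕ → ℕ, Function.Injective h ∧ ∀ n, S (x n) (y (h n))) ↔
      (Kxyᶜ.Finite ∧
        ∃ g : ℕ → ℕ, Set.InjOn g Kxyᶜ ∧ ∀ n ∈ Kxyᶜ, g n ∈ Fy ∧ S (x n) (y (g n)))) := by
  intro Ky Fy Kxy
  classical
  have : IsTrans ℕ S := ⟨htrans⟩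
  have hFy : Fy.Finite :=
    (WellQuasiOrdered.finite_setOf_finite_upper hwqo y).subset fun _ => not_not.1
  constructor
  · rintro ⟨h, hinj, hS⟩
    have hmem : ∀ n ∈ Kxyᶜ, h n ∈ Fy := fun n hn hK => hn ⟨h n, hK, hS n⟩
    exact ⟨(hFy.preimage hinj.injOn).subset hmem, h, hinj.injOn, fun n hn => ⟨hmem n hn, hS n⟩⟩
  · rintro ⟨-, g, hg_inj, hg⟩
    have hI : ∀ n, {m | m ∈ Ky ∧ (n ∈ Kxy → S (x n) (y m))}.Infinite := by
      intro n
      by_cases hn : n ∈ Kxy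
      · obtain ⟨k, hk, hxk⟩ := hn
        exact (hk.sdiff hFy).mono fun m (hm : m ∈ _ \ Fy) =>
          ⟨not_not.1 hm.2, fun _ => htrans _ _ _ hxk hm.1⟩
      · have hKy : Ky.Infinite := compl_compl Ky ▸ hFy.infinite_compl
        exact hKy.mono fun m hm => ⟨hm, fun h => (hn h).elim⟩
    obtain ⟨f, hf, hfI⟩ := Nat.exists_strictMono_forall_mem hI
    refine ⟨Kxy.piecewise f g, (injective_piecewise_iff _).2 ⟨hf.injective.injOn, hg_inj,
      fun a _ b hb hab => (hg b hb).1 (hab ▸ (hfI a).1)⟩, fun n => ?_⟩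
    by_cases hn : n ∈ Kxy
    · simpa [hn] using (hfI n).2 hn
    · simpa [hn] using (hg n hn).2

/-- For a wqo `S` on `ω`: `x S^inj y` iff `ω \ K_{x,y}` is finite and there is an
injective `g : ω \ K_{x,y} → F_y` with `x_n S y_{g(n)}` on `ω \ K_{x,y}`. -/
theorem stmt_13 (S : ℕ → ℕ → Prop)
    (hrefl : ∀ x, S x x) (htrans : ∀ x y z, S x y → S y z → S x z)
    (hwqo : ∀ z : ℕ → ℕ, ∃ i j : ℕ, i < j ∧ S (z i) (z j))
    (x y : ℕ → ℕ) :
    let Ky : Set ℕ := {n | {m : ℕ | S (y n) (y m)}.Infinite}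
    let Fy : Set ℕ := Kyᶜ
    let Kxy : Set ℕ := {n | ∃ m ∈ Ky, S (x n) (y m)}
    ((∃ h : ℕ → ℕ, Function.Injective h ∧ ∀ n, S (x n) (y (h n))) ↔
      (Kxyᶜ.Finite ∧
        ∃ g : ℕ → ℕ, Set.InjOn g Kxyᶜ ∧ ∀ n ∈ Kxyᶜ, g n ∈ Fy ∧ S (x n) (y (g n)))) :=
  stmt_13_general S htrans hwqo x y
end

section
/- Consider the linear order (ℚ, ≥). The relation ≥^inj on sequences of rationals is Σ¹₁-complete; in particular there is a continuous map from countable linear orders L to pairs of rational sequences (α_L, β_L) such that L is not a well-order iff α_L ≥^inj β_L. -/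
/-- The rationals with the discrete topology. -/
def Qdisc : Type := ℚ

instance : TopologicalSpace Qdisc := ⊥

noncomputable instance : LinearOrder Qdisc := inferInstanceAs (LinearOrder ℚ)

/-- The jump `≥^inj` of the linear order `(ℚ, ≥)` on sequences of rationals. -/
def geInj (a b : ℕ → Qdisc) : Prop :=
  ∃ f : ℕ → ℕ, Function.Injective f ∧ ∀ n, b (f n) ≤ a n

/-!
`≥^inj` is analytic, being the projection of the closed set of triples `(α, β, f)` with `f` an
injection witnessing `α ≥^inj β`.

For hardness, a tree `T` on `ℕ` is coded by the sequence `β` whose `i`-th term is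
`kbEmbedding s ∈ (0, 1]` if the `i`-th finite sequence `s` is a node of `T`, and `2 + i` otherwise;
`kbEmbedding` embeds the Kleene–Brouwer order into `ℚ`. Following the orbit of an injection
witnessing `(1, β₀, β₁, …) ≥^inj β` gives an infinite strictly `β`-decreasing sequence starting
below `1`, i.e. a Kleene–Brouwer-descending sequence of nodes of `T`, and such a sequence exists
iff `T` has an infinite branch. Conversely a descending sequence `m` yields the injection
`0 ↦ m 0`, `m j + 1 ↦ m (j + 1)`, and `k + 1 ↦ k` otherwise.

A point `z` is in the range of a continuous `g` on Baire space iff the tree of finite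
approximations of a `g`-preimage of `z` has a branch, and a relation is ill-founded iff its tree
of descending sequences has a branch; both trees depend continuously on the data.
-/

open Function Set Filter Topology Descriptive MeasureTheory

instance : DiscreteTopology Qdisc := ⟨rfl⟩

instance : Countable Qdisc := inferInstanceAs (Countable ℚ)

instance : PolishSpace Qdisc := inferInstance

theorem isClosed_setOf_injective {α β : Type*} [TopologicalSpace β] [DiscreteTopology β] :
    IsClosed {f : α → β | Injective f} := by
  simp only [Injective, ofPred_forall]
  refine isClosed_iInter fun a => isClosed_iInter fun b => ?_
  exact (isClosed_discrete {p : β × β | p.1 = p.2 → a = b}).preimage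
    (f := fun f : α → β => (f a, f b)) (by fun_prop)

theorem analyticSet_setOf_geInj :
    AnalyticSet {p : (ℕ → Qdisc) × (ℕ → Qdisc) | geInj p.1 p.2} := by
  have heval : Continuous fun q : (ℕ → Qdisc) × ℕ => q.1 q.2 :=
    continuous_prod_of_discrete_right.2 continuous_apply
  have hclosed : IsClosed ({q : ((ℕ → Qdisc) × (ℕ → Qdisc)) × (ℕ → ℕ) | Injective q.2} ∩
      ⋂ n, {q | q.1.2 (q.2 n) ≤ q.1.1 n}) :=
    (isClosed_setOf_injective.preimage continuous_snd).inter <| isClosed_iInter fun n => by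
      have hcont : Continuous fun q : ((ℕ → Qdisc) × (ℕ → Qdisc)) × (ℕ → ℕ) =>
          (q.1.2 (q.2 n), q.1.1 n) :=
        (heval.comp (continuous_fst.snd.prodMk ((continuous_apply n).comp continuous_snd))).prodMk
          ((continuous_apply n).comp continuous_fst.fst)
      exact (isClosed_discrete {p : Qdisc × Qdisc | p.1 ≤ p.2}).preimage hcont
  convert hclosed.analyticSet.image_of_continuous continuous_fst
  ext p
  simp [geInj]

section SeqCons

variable {α : Type*}

def seqCons (a : α) (s : ℕ → α) : ℕ → α
  | 0 => a
  | n + 1 => s n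

theorem seqCons_injective {a : α} {s : ℕ → α} (hs : Injective s) (ha : a ∉ range s) :
    Injective (seqCons a s) := by
  rintro (_ | i) (_ | j) h
  · rfl
  · exact absurd ⟨j, h.symm⟩ ha
  · exact absurd ⟨i, h⟩ ha
  · exact congrArg _ (hs h)

end SeqCons

theorem exists_injective_orbit {f : ℕ → ℕ} (hf : Injective f) :
    ∃ m : ℕ → ℕ, Injective m ∧ m 0 = f 0 ∧ ∀ j, m (j + 1) = f (m j + 1) := by
  let m : ℕ → ℕ := fun j => Nat.rec (f 0) (fun _ k => f (k + 1)) j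
  refine ⟨m, fun i j hij => ?_, rfl, fun _ => rfl⟩
  induction i generalizing j with
  | zero => cases j with
    | zero => rfl
    | succ j => exact absurd (hf hij) (by omega)
  | succ i ih => cases j with
    | zero => exact absurd (hf hij) (by omega)
    | succ j => exact congrArg (· + 1) (ih j (Nat.succ_injective (hf hij)))

noncomputable def shiftAlong (m : ℕ → ℕ) : ℕ → ℕ := extend m (fun j => m (j + 1)) id

theorem shiftAlong_apply {m : ℕ → ℕ} (hm : Injective m) (j : ℕ) :
    shiftAlong m (m j) = m (j + 1) :=
  hm.extend_apply _ _ _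

theorem shiftAlong_of_notMem {m : ℕ → ℕ} {k : ℕ} (hk : k ∉ range m) : shiftAlong m k = k :=
  extend_apply' _ _ _ hk

theorem injective_seqCons_shiftAlong {m : ℕ → ℕ} (hm : Injective m) :
    Injective (seqCons (m 0) (shiftAlong m)) := by
  have hrange : ∀ k, shiftAlong m k ∈ range m ↔ k ∈ range m := by
    intro k
    by_cases hk : k ∈ range m
    · obtain ⟨j, rfl⟩ := hk
      simp [shiftAlong_apply hm]
    · simp [shiftAlong_of_notMem hk, hk]
  refine seqCons_injective (fun k l hkl => ?_) ?_
  · by_cases hk : k ∈ range m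
    · obtain ⟨i, rfl⟩ := hk
      obtain ⟨j, rfl⟩ := (hrange l).1 (hkl ▸ (hrange _).2 ⟨i, rfl⟩)
      rw [shiftAlong_apply hm, shiftAlong_apply hm] at hkl
      rw [show i = j by simpa using hm hkl]
    · have hl : l ∉ range m := fun hl => hk ((hrange k).1 (hkl ▸ (hrange l).2 hl))
      rwa [shiftAlong_of_notMem hk, shiftAlong_of_notMem hl] at hkl
  · rintro ⟨k, hk⟩
    by_cases hkm : k ∈ range m
    · obtain ⟨j, rfl⟩ := hkm
      rw [shiftAlong_apply hm] at hk
      exact absurd (hm hk) (by omega)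
    · exact hkm (by rw [shiftAlong_of_notMem hkm] at hk; exact ⟨0, hk.symm⟩)

theorem geInj_seqCons_iff {β : ℕ → ℚ} (hβ : Injective β) (c : ℚ) :
    geInj (seqCons c β) β ↔ ∃ m : ℕ → ℕ, β (m 0) ≤ c ∧ ∀ j, β (m (j + 1)) < β (m j) := by
  constructor
  · rintro ⟨f, hf, hle⟩
    obtain ⟨m, hm, hm0, hmS⟩ := exists_injective_orbit hf
    refine ⟨m, hm0 ▸ hle 0, fun j => ?_⟩
    have hle' : β (m (j + 1)) ≤ β (m j) := hmS j ▸ hle (m j + 1)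
    exact hle'.lt_of_ne (hβ.ne (hm.ne (by omega)))
  · rintro ⟨m, hm0, hdesc⟩
    have hm : Injective m := (strictAnti_nat_of_succ_lt hdesc).injective.of_comp
    refine ⟨seqCons (m 0) (shiftAlong m), injective_seqCons_shiftAlong hm, ?_⟩
    rintro (_ | k)
    · exact hm0
    · show β (shiftAlong m k) ≤ β k
      by_cases hk : k ∈ range m
      · obtain ⟨j, rfl⟩ := hk
        rw [shiftAlong_apply hm]
        exact (hdesc j).le
      · rw [shiftAlong_of_notMem hk]

/-- An order embedding of the Kleene–Brouwer order into `ℚ`: `n :: s` is sent into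
`(1 - 2⁻¹ ^ n, 1 - 2⁻¹ ^ (n + 1)]` by an increasing affine image of `kbEmbedding s ∈ (0, 1]`. -/
def kbEmbedding : List ℕ → ℚ
  | [] => 1
  | n :: s => 1 - 2⁻¹ ^ n + 2⁻¹ ^ (n + 1) * kbEmbedding s

theorem kbEmbedding_mem_Ioc (s : List ℕ) : kbEmbedding s ∈ Ioc 0 1 := by
  induction s with
  | nil => simp [kbEmbedding]
  | cons n s ih =>
    have hq : (2⁻¹ : ℚ) ^ (n + 1) = 2⁻¹ ^ n / 2 := by ring
    have hpos : (0 : ℚ) < 2⁻¹ ^ n := by positivity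
    have hle : (2⁻¹ : ℚ) ^ n ≤ 1 := pow_le_one₀ (by norm_num) (by norm_num)
    rw [kbEmbedding, hq]
    constructor <;> nlinarith [ih.1, ih.2]

theorem kbEmbedding_cons_mem_Ioc (n : ℕ) (s : List ℕ) :
    kbEmbedding (n :: s) ∈ Ioc (1 - 2⁻¹ ^ n) (1 - 2⁻¹ ^ (n + 1)) := by
  have hq : (2⁻¹ : ℚ) ^ (n + 1) = 2⁻¹ ^ n / 2 := by ring
  have hpos : (0 : ℚ) < 2⁻¹ ^ n := by positivity
  have hs := kbEmbedding_mem_Ioc s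
  rw [kbEmbedding, hq]
  constructor <;> nlinarith [hs.1, hs.2]

theorem kbEmbedding_cons_lt_nil (n : ℕ) (s : List ℕ) : kbEmbedding (n :: s) < kbEmbedding [] :=
  (kbEmbedding_cons_mem_Ioc n s).2.trans_lt (by simp [kbEmbedding])

theorem kbEmbedding_cons_lt_cons_of_lt {a b : ℕ} (h : a < b) (s t : List ℕ) :
    kbEmbedding (a :: s) < kbEmbedding (b :: t) :=
  calc kbEmbedding (a :: s) ≤ 1 - 2⁻¹ ^ (a + 1) := (kbEmbedding_cons_mem_Ioc a s).2
    _ ≤ 1 - 2⁻¹ ^ b := sub_le_sub_left (pow_le_pow_of_le_one (by norm_num) (by norm_num) h) 1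
    _ < kbEmbedding (b :: t) := (kbEmbedding_cons_mem_Ioc b t).1

theorem kbEmbedding_cons_lt_cons_iff (a : ℕ) (s t : List ℕ) :
    kbEmbedding (a :: s) < kbEmbedding (a :: t) ↔ kbEmbedding s < kbEmbedding t := by
  simp only [kbEmbedding, add_lt_add_iff_left]
  exact mul_lt_mul_iff_right₀ (by positivity)

theorem kbEmbedding_append_singleton_lt (s : List ℕ) (n : ℕ) :
    kbEmbedding (s ++ [n]) < kbEmbedding s := by
  induction s with
  | nil => exact kbEmbedding_cons_lt_nil n []
  | cons a s ih => exact (kbEmbedding_cons_lt_cons_iff a _ _).2 ih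

theorem kbEmbedding_injective : Injective kbEmbedding := by
  intro s t h
  induction s generalizing t with
  | nil => cases t with
    | nil => rfl
    | cons b t => exact absurd h.symm (kbEmbedding_cons_lt_nil b t).ne
  | cons a s ih => cases t with
    | nil => exact absurd h (kbEmbedding_cons_lt_nil a s).ne
    | cons b t =>
      rcases lt_trichotomy a b with hab | rfl | hab
      · exact absurd h (kbEmbedding_cons_lt_cons_of_lt hab s t).ne
      · simp only [kbEmbedding, add_right_inj, mul_eq_mul_left_iff] at h
        rw [ih (h.resolve_right (by positivity))]
      · exact absurd h.symm (kbEmbedding_cons_lt_cons_of_lt hab t s).ne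

theorem strictAnti_kbEmbedding_map_range (y : ℕ → ℕ) :
    StrictAnti fun n => kbEmbedding ((List.range n).map y) :=
  strictAnti_nat_of_succ_lt fun n => by
    simpa [List.range_succ] using kbEmbedding_append_singleton_lt ((List.range n).map y) (y n)

def HasInfiniteBranch (T : tree ℕ) : Prop :=
  ∃ y : ℕ → ℕ, ∀ n, (List.range n).map y ∈ T

/-- The first entries of a Kleene–Brouwer-descending sequence decrease, hence stabilise. -/
theorem exists_cons_strictAnti_kbEmbedding {t : ℕ → List ℕ} (ht : StrictAnti (kbEmbedding ∘ t)) :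
    ∃ (a : ℕ) (t' : ℕ → List ℕ), StrictAnti (kbEmbedding ∘ t') ∧ ∀ j, ∃ k, t k = a :: t' j := by
  have hne : ∀ j, t (j + 1) ≠ [] := by
    intro j hnil
    have h := ht (Nat.succ_pos j)
    simp only [comp_apply, hnil] at h
    exact h.not_ge (kbEmbedding_mem_Ioc _).2
  choose a s hs using fun j => List.exists_cons_of_ne_nil (hne j)
  have ha : Antitone a := antitone_nat_of_succ_le fun j => by
    by_contra! hlt
    have h := ht (Nat.lt_succ_self (j + 1))
    simp only [comp_apply, hs] at h
    exact h.not_gt (kbEmbedding_cons_lt_cons_of_lt hlt _ _)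
  obtain ⟨N, hN⟩ := WellFoundedLT.antitone_chain_condition ha
  have htN : ∀ j, t (N + j + 1) = a N :: s (N + j) := fun j => by
    rw [hs, hN (N + j) (by omega)]
  refine ⟨a N, fun j => s (N + j), strictAnti_nat_of_succ_lt fun j => ?_, fun j => ⟨_, htN j⟩⟩
  have h := ht (show N + j + 1 < N + (j + 1) + 1 by omega)
  rw [comp_apply, comp_apply, htN, htN] at h
  exact (kbEmbedding_cons_lt_cons_iff _ _ _).1 h

theorem hasInfiniteBranch_of_strictAnti {T : tree ℕ} {t : ℕ → List ℕ} (hT : ∀ j, t j ∈ T)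
    (ht : StrictAnti (kbEmbedding ∘ t)) : HasInfiniteBranch T := by
  let P : tree ℕ → Prop := fun S => ∃ t : ℕ → List ℕ, (∀ j, t j ∈ S) ∧ StrictAnti (kbEmbedding ∘ t)
  have step : ∀ S : {S // P S}, ∃ a, P (Tree.subAt S.1 [a]) := by
    rintro ⟨S, t, hS, ht⟩
    obtain ⟨a, t', ht', hsub⟩ := exists_cons_strictAnti_kbEmbedding ht
    refine ⟨a, t', fun j => ?_, ht'⟩
    obtain ⟨k, hk⟩ := hsub j
    simpa [hk] using hS k
  choose a ha using step
  let S : ℕ → {S // P S} := fun n => Nat.rec ⟨T, t, hT, ht⟩ (fun _ S => ⟨_, ha S⟩) n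
  have hS : ∀ n, (S n).1 = Tree.subAt T ((List.range n).map fun k => a (S k)) := by
    intro n
    induction n with
    | zero => simp [S]
    | succ n ih => simp [S, ih, List.range_succ]
  refine ⟨fun k => a (S k), fun n => ?_⟩
  obtain ⟨t, ht, -⟩ := (S n).2
  have hnil : [] ∈ (S n).1 := Tree.mem_of_prefix (List.nil_prefix) (ht 0)
  simpa [hS] using hnil

/-- Non-nodes get distinct values above `1`, which no sequence descending from `1` can reach. -/
noncomputable def nodeSeq (T : tree ℕ) (i : ℕ) : ℚ :=
  open Classical in
  if Denumerable.ofNat (List ℕ) i ∈ T then kbEmbedding (Denumerable.ofNat (List ℕ) i) else 2 + i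

theorem nodeSeq_injective (T : tree ℕ) : Injective (nodeSeq T) := by
  intro i j h
  have hnode : ∀ {i j : ℕ}, Denumerable.ofNat (List ℕ) i ∈ T → nodeSeq T i ≠ 2 + j := by
    intro i j hi h
    simp only [nodeSeq, hi, if_true] at h
    linarith [(kbEmbedding_mem_Ioc (Denumerable.ofNat (List ℕ) i)).2, (j.cast_nonneg : (0 : ℚ) ≤ j)]
  by_cases hi : Denumerable.ofNat (List ℕ) i ∈ T <;> by_cases hj : Denumerable.ofNat (List ℕ) j ∈ T
  · simp only [nodeSeq, hi, hj, if_true] at h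
    simpa using congrArg Encodable.encode (kbEmbedding_injective h)
  · exact absurd (h.trans (by simp [nodeSeq, hj])) (hnode (j := j) hi)
  · exact absurd (h.symm.trans (by simp [nodeSeq, hi])) (hnode (j := i) hj)
  · simpa [nodeSeq, hi, hj] using h

theorem nodeSeq_of_le_one {T : tree ℕ} {i : ℕ} (h : nodeSeq T i ≤ 1) :
    Denumerable.ofNat (List ℕ) i ∈ T ∧
      nodeSeq T i = kbEmbedding (Denumerable.ofNat (List ℕ) i) := by
  by_cases hi : Denumerable.ofNat (List ℕ) i ∈ T
  · simp [nodeSeq, hi]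
  · simp only [nodeSeq, hi, if_false] at h
    linarith [(i.cast_nonneg : (0 : ℚ) ≤ i)]

theorem nodeSeq_encode {T : tree ℕ} {s : List ℕ} (hs : s ∈ T) :
    nodeSeq T (Encodable.encode s) = kbEmbedding s := by
  simp [nodeSeq, hs]

noncomputable def treeCode (T : tree ℕ) : (ℕ → Qdisc) × (ℕ → Qdisc) :=
  (seqCons (1 : ℚ) (nodeSeq T), nodeSeq T)

theorem geInj_treeCode_iff (T : tree ℕ) :
    geInj (treeCode T).1 (treeCode T).2 ↔ HasInfiniteBranch T := by
  refine (geInj_seqCons_iff (nodeSeq_injective T) 1).trans ⟨?_, ?_⟩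
  · rintro ⟨m, hm0, hdesc⟩
    have hle : ∀ j, nodeSeq T (m j) ≤ 1 := fun j => by
      induction j with
      | zero => exact hm0
      | succ j ih => exact (hdesc j).le.trans ih
    refine hasInfiniteBranch_of_strictAnti (t := fun j => Denumerable.ofNat (List ℕ) (m j))
      (fun j => (nodeSeq_of_le_one (hle j)).1) (strictAnti_nat_of_succ_lt fun j => ?_)
    simpa only [comp_apply, (nodeSeq_of_le_one (hle _)).2] using hdesc j
  · rintro ⟨y, hy⟩
    refine ⟨fun n => Encodable.encode ((List.range n).map y), ?_, fun n => ?_⟩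
    · rw [nodeSeq_encode (hy 0)]
      simp [kbEmbedding]
    · simp only [nodeSeq_encode (hy _)]
      exact strictAnti_kbEmbedding_map_range y n.lt_succ_self

theorem continuous_treeCode {X : Type*} [TopologicalSpace X] {T : X → tree ℕ}
    (hT : ∀ s, IsClopen {x | s ∈ T x}) : Continuous fun x => treeCode (T x) := by
  classical
  have hnode : ∀ i, Continuous fun x => (treeCode (T x)).2 i := fun i => by
    simp only [treeCode, nodeSeq]
    exact continuous_if (β := Qdisc) (by simp [(hT _).frontier_eq]) continuousOn_const
      continuousOn_const
  refine .prodMk (f := fun x => (treeCode (T x)).1) (g := fun x => (treeCode (T x)).2)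
    (continuous_pi fun i => ?_) (continuous_pi hnode)
  cases i with
  | zero => exact continuous_const
  | succ i => exact hnode i

theorem exists_continuous_reduction_of_trees {X : Type*} [TopologicalSpace X] (B : Set X)
    (T : X → tree ℕ) (hT : ∀ s, IsClopen {x | s ∈ T x})
    (hB : ∀ x, x ∈ B ↔ HasInfiniteBranch (T x)) :
    ∃ F : X → (ℕ → Qdisc) × (ℕ → Qdisc), Continuous F ∧ ∀ x, x ∈ B ↔ geInj (F x).1 (F x).2 :=
  ⟨fun x => treeCode (T x), continuous_treeCode hT,
    fun x => (hB x).trans (geInj_treeCode_iff _).symm⟩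

def rangeTree (g : (ℕ → ℕ) → ℕ → ℕ) (z : ℕ → ℕ) : tree ℕ :=
  ⟨{s | ∃ y, (List.range s.length).map y = s ∧ ∀ k < s.length, g y k = z k}, by
    rintro s a ⟨y, hy, hgy⟩
    simp only [List.length_append, List.length_singleton, List.range_succ, List.map_append,
      List.map_singleton] at hy
    exact ⟨y, List.append_inj_left' hy rfl, fun k hk => hgy k (by simp; omega)⟩⟩

@[simp]
theorem mem_rangeTree {g : (ℕ → ℕ) → ℕ → ℕ} {z : ℕ → ℕ} {s : List ℕ} :
    s ∈ rangeTree g z ↔ ∃ y, (List.range s.length).map y = s ∧ ∀ k < s.length, g y k = z k :=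
  Iff.rfl

theorem isClopen_setOf_mem_rangeTree (g : (ℕ → ℕ) → ℕ → ℕ) (s : List ℕ) :
    IsClopen {z | s ∈ rangeTree g z} := by
  have := (isClopen_discrete {v : Fin s.length → ℕ |
      ∃ y, (List.range s.length).map y = s ∧ ∀ k : Fin s.length, g y k = v k}).preimage
    (by fun_prop : Continuous fun (z : ℕ → ℕ) (k : Fin s.length) => z k)
  convert this using 1
  ext z
  simp [Fin.forall_iff]

theorem mem_range_iff_hasInfiniteBranch {g : (ℕ → ℕ) → ℕ → ℕ} (hg : Continuous g) (z : ℕ → ℕ) :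
    z ∈ range g ↔ HasInfiniteBranch (rangeTree g z) := by
  constructor
  · rintro ⟨y, rfl⟩
    exact ⟨y, fun n => ⟨y, by simp, fun _ _ => rfl⟩⟩
  · rintro ⟨y, hy⟩
    choose w hwy hgw using fun n => hy n
    simp only [List.length_map, List.length_range, List.map_inj_left, List.mem_range] at hwy hgw
    have hw : Tendsto w atTop (𝓝 y) := tendsto_pi_nhds.2 fun k =>
      tendsto_nhds_of_eventually_eq (eventually_atTop.2 ⟨k + 1, fun n hn => hwy n k (by omega)⟩)
    have hgw' : Tendsto (fun n => g (w n)) atTop (𝓝 z) := tendsto_pi_nhds.2 fun k =>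
      tendsto_nhds_of_eventually_eq (eventually_atTop.2 ⟨k + 1, fun n hn => hgw n k (by omega)⟩)
    exact ⟨y, tendsto_nhds_unique ((hg.tendsto y).comp hw) hgw'⟩

def descTree (r : ℕ → ℕ → Prop) : tree ℕ :=
  ⟨{s | s.IsChain fun a b => r b a}, by
    rintro s a h
    exact h.prefix (List.prefix_append _ _)⟩

@[simp]
theorem mem_descTree {r : ℕ → ℕ → Prop} {s : List ℕ} :
    s ∈ descTree r ↔ s.IsChain fun a b => r b a :=
  Iff.rfl

theorem hasInfiniteBranch_descTree_iff (r : ℕ → ℕ → Prop) :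
    HasInfiniteBranch (descTree r) ↔ ¬ WellFounded r := by
  have hbranch : ∀ y : ℕ → ℕ, (∀ n, (List.range n).map y ∈ descTree r) ↔
      ∀ n, r (y (n + 1)) (y n) := fun y => by
    simp only [mem_descTree, List.isChain_map, List.isChain_range]
    exact ⟨fun h n => h (n + 2) n (by omega), fun h _ m _ => h m⟩
  simp only [HasInfiniteBranch, hbranch, wellFounded_iff_isEmpty_descending_chain,
    not_isEmpty_iff, nonempty_subtype]

theorem isClopen_setOf_isChain {X α : Type*} [TopologicalSpace X] {R : X → α → α → Prop}
    (hR : ∀ a b, IsClopen {x | R x a b}) : ∀ l : List α, IsClopen {x | l.IsChain (R x)}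
  | [] => by simp [isClopen_univ]
  | [_] => by simp [isClopen_univ]
  | a :: b :: l => by
    simp only [List.isChain_cons_cons, ofPred_and]
    exact (hR a b).inter (isClopen_setOf_isChain hR (b :: l))

theorem exists_continuous_reduction_of_analyticSet {B : Set (ℕ → ℕ)} (hB : AnalyticSet B) :
    ∃ F : (ℕ → ℕ) → (ℕ → Qdisc) × (ℕ → Qdisc), Continuous F ∧
      ∀ z, z ∈ B ↔ geInj (F z).1 (F z).2 := by
  rw [AnalyticSet_def] at hB
  rcases hB with rfl | ⟨g, hg, rfl⟩
  · exact exists_continuous_reduction_of_trees ∅ (fun _ => ⊥) (by simp [isClopen_empty])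
      (fun _ => by simp [HasInfiniteBranch])
  · exact exists_continuous_reduction_of_trees _ (rangeTree g) (isClopen_setOf_mem_rangeTree g)
      (mem_range_iff_hasInfiniteBranch hg)

theorem exists_continuous_reduction_not_wellFounded :
    ∃ F : (ℕ → ℕ → Bool) → (ℕ → Qdisc) × (ℕ → Qdisc), Continuous F ∧
      ∀ L : ℕ → ℕ → Bool,
        ¬ WellFounded (fun a b => L a b = true ∧ a ≠ b) ↔ geInj (F L).1 (F L).2 := by
  have hclopen (a b : ℕ) : IsClopen {L : ℕ → ℕ → Bool | L b a = true ∧ b ≠ a} := by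
    exact (isClopen_discrete {v : Bool | v = true ∧ b ≠ a}).preimage
      (f := fun L : ℕ → ℕ → Bool => L b a) (by fun_prop)
  exact exists_continuous_reduction_of_trees
    {L : ℕ → ℕ → Bool | ¬ WellFounded fun a b => L a b = true ∧ a ≠ b}
    (fun L => descTree fun a b => L a b = true ∧ a ≠ b) (isClopen_setOf_isChain hclopen)
    (fun L => (hasInfiniteBranch_descTree_iff _).symm)

/-- The relation `≥^inj` on rational sequences is Σ¹₁-complete: it is analytic,
every analytic subset of Baire space continuously reduces to it, and in
particular there is a continuous map sending (a code of) a countable linear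
order `L` to a pair of rational sequences `(α_L, β_L)` with `L` not a
well-order iff `α_L ≥^inj β_L`. -/
theorem stmt_14 :
    MeasureTheory.AnalyticSet {p : (ℕ → Qdisc) × (ℕ → Qdisc) | geInj p.1 p.2} ∧
    (∀ B : Set (ℕ → ℕ), MeasureTheory.AnalyticSet B →
      ∃ F : (ℕ → ℕ) → (ℕ → Qdisc) × (ℕ → Qdisc), Continuous F ∧
        ∀ z, z ∈ B ↔ geInj (F z).1 (F z).2) ∧
    (∃ F : (ℕ → ℕ → Bool) → (ℕ → Qdisc) × (ℕ → Qdisc), Continuous F ∧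
      ∀ L : ℕ → ℕ → Bool,
        IsLinearOrder ℕ (fun a b => L a b = true) →
        (¬ WellFounded (fun a b : ℕ => L a b = true ∧ a ≠ b) ↔
          geInj (F L).1 (F L).2)) := by
  obtain ⟨F, hF, hFL⟩ := exists_continuous_reduction_not_wellFounded
  exact ⟨analyticSet_setOf_geInj, fun _ => exists_continuous_reduction_of_analyticSet,
    F, hF, fun L _ => hFL L⟩
end

section
/- The map i sending a set X ⊆ D \ {0} to the ultrametric space U(X ∪ {0}) (with domain X ∪ {0} and distance d(r,r') = max{r,r'} for r ≠ r') is an order-embedding of (𝒫(D \ {0}), ⊆) into the quasi-order of isometric embeddability: X ⊆ Y if and only if U(X ∪ {0}) isometrically embeds into U(Y ∪ {0}). -/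
/-!
A subset gives the inclusion embedding. Conversely, in `U(A)` the distance from a point `x > 0`
to `0` is `x`, and a nonzero distance `max r r'` is always one of the two points; so an
isometric image of the pair `x, 0` contains `x`, which therefore lies in `Y ∪ {0}`.
-/

/-- The distance of `U(A)`. -/
noncomputable def ultraDist (r s : ℝ) : ℝ := if r = s then 0 else max r s

lemma ultraDist_eq_left_or_right {r s : ℝ} (h : ultraDist r s ≠ 0) :
    ultraDist r s = r ∨ ultraDist r s = s := by
  unfold ultraDist at h ⊢
  split_ifs at h ⊢ with hrs
  · exact absurd rfl h
  · exact max_choice r s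

lemma ultraDist_zero_right {x : ℝ} (hx : 0 < x) : ultraDist x 0 = x := by
  simp [ultraDist, hx.ne', hx.le]

lemma mem_of_ultraDist_isometry {A B : Set ℝ} (φ : A → B)
    (hφ : ∀ a b : A, ultraDist (φ a) (φ b) = ultraDist a b) {x : ℝ} (hxA : x ∈ A)
    (h0A : (0 : ℝ) ∈ A) (hx : 0 < x) : x ∈ B := by
  have hdist := hφ ⟨x, hxA⟩ ⟨0, h0A⟩
  rw [ultraDist_zero_right hx] at hdist
  rcases ultraDist_eq_left_or_right (hdist ▸ hx.ne') with h | h <;> rw [hdist] at h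
  · exact h ▸ (φ _).2
  · exact h ▸ (φ _).2

theorem stmt_18_general (D : Set ℝ) (hnn : ∀ r ∈ D, 0 ≤ r)
    (X Y : Set ℝ) (hX : X ⊆ D \ {0}) :
    X ⊆ Y ↔
      ∃ φ : (X ∪ {0} : Set ℝ) → (Y ∪ {0} : Set ℝ),
        Function.Injective φ ∧
        ∀ a b : (X ∪ {0} : Set ℝ),
          (if ((φ a : ℝ)) = ((φ b : ℝ)) then (0:ℝ) else max (φ a : ℝ) (φ b : ℝ)) =
          (if ((a : ℝ)) = ((b : ℝ)) then (0:ℝ) else max (a : ℝ) (b : ℝ)) := by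
  constructor
  · intro hXY
    exact ⟨Set.inclusion (Set.union_subset_union_left _ hXY), Set.inclusion_injective _,
      fun _ _ => rfl⟩
  · rintro ⟨φ, -, hφ⟩ x hx
    have hx0 : x ≠ 0 := (hX hx).2
    have hxpos : 0 < x := (hnn x (hX hx).1).lt_of_ne' hx0
    exact (mem_of_ultraDist_isometry φ hφ (Or.inl hx) (Or.inr rfl) hxpos).resolve_right hx0

/-- The map `X ↦ U(X ∪ {0})` is an order-embedding of `(𝒫(D \ {0}), ⊆)` into
isometric embeddability: `X ⊆ Y` iff `U(X ∪ {0})` isometrically embeds into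
`U(Y ∪ {0})`. -/
theorem stmt_18 (D : Set ℝ) (h0 : (0:ℝ) ∈ D) (hnn : ∀ r ∈ D, 0 ≤ r)
    (X Y : Set ℝ) (hX : X ⊆ D \ {0}) (hY : Y ⊆ D \ {0}) :
    X ⊆ Y ↔
      ∃ φ : (X ∪ {0} : Set ℝ) → (Y ∪ {0} : Set ℝ),
        Function.Injective φ ∧
        ∀ a b : (X ∪ {0} : Set ℝ),
          (if ((φ a : ℝ)) = ((φ b : ℝ)) then (0:ℝ) else max (φ a : ℝ) (φ b : ℝ)) =
          (if ((a : ℝ)) = ((b : ℝ)) then (0:ℝ) else max (a : ℝ) (b : ℝ)) :=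
  stmt_18_general D hnn X Y hX
end

section
/- Let A ⊆ ℝ≥0 be a set of distances with 0 ∈ A. Every metric space realizing only distances in A is an ultrametric space if and only if A is well-spaced, i.e., for all r, r' ∈ A, r < r' implies 2r < r'. (For the forward direction: if r < r' ≤ 2r for some r, r' ∈ A, then the three-point space with two sides of length r and one of length r' is a metric space with distances in A that is not ultrametric; for the backward direction: in any metric space with distances in a well-spaced set, the strong triangle inequality holds.) -/
/-!
If `d(a,b) > max (d(a,c), d(c,b)) = m` while all three distances lie in a well-spaced set, then
`d(a,b) > 2m` since both `d(a,b)` and `m` belong to the set, contradicting the triangle inequality.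
Conversely, if `r < r' ≤ 2r` with `r, r'` realized, the isosceles triangle with legs `r` and base
`r'` is a metric space with distances in the set that violates the strong triangle inequality.
-/

def WellSpaced (A : Set ℝ) : Prop :=
  ∀ r ∈ A, ∀ r' ∈ A, r < r' → 2 * r < r'

theorem WellSpaced.le_max {A : Set ℝ} (hA : WellSpaced A) {x y z : ℝ} (hx : x ∈ A) (hy : y ∈ A)
    (hz : z ∈ A) (h : x ≤ y + z) : x ≤ max y z := by
  by_contra! hlt
  have hmax : max y z ∈ A := by
    rcases max_choice y z with hm | hm <;> rw [hm] <;> assumption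
  linarith [hA _ hmax _ hx hlt, le_max_left y z, le_max_right y z]

/-- The triangle on `Fin 3` with base `b` between `0` and `1` and both legs equal to `s`. -/
def isoscelesDist (s b : ℝ) (i j : Fin 3) : ℝ :=
  if i = j then 0 else if i ≠ 2 ∧ j ≠ 2 then b else s

section isoscelesDist

variable {s b : ℝ}

theorem isoscelesDist_eq_zero_iff (hs : s ≠ 0) (hb : b ≠ 0) (i j : Fin 3) :
    isoscelesDist s b i j = 0 ↔ i = j := by
  fin_cases i <;> fin_cases j <;> simp [isoscelesDist, hs, hb]

theorem isoscelesDist_comm (i j : Fin 3) : isoscelesDist s b i j = isoscelesDist s b j i := by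
  fin_cases i <;> fin_cases j <;> simp [isoscelesDist]

theorem isoscelesDist_triangle (hs : 0 ≤ s) (hb : 0 ≤ b) (hbs : b ≤ 2 * s) (i j k : Fin 3) :
    isoscelesDist s b i k ≤ isoscelesDist s b i j + isoscelesDist s b j k := by
  fin_cases i <;> fin_cases j <;> fin_cases k <;> simp [isoscelesDist] <;> linarith

theorem isoscelesDist_mem {A : Set ℝ} (h0 : (0 : ℝ) ∈ A) (hs : s ∈ A) (hb : b ∈ A)
    (i j : Fin 3) : isoscelesDist s b i j ∈ A := by
  unfold isoscelesDist
  split_ifs <;> assumption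

end isoscelesDist

theorem stmt_19_general (A : Set ℝ) (h0 : (0:ℝ) ∈ A) :
    (∀ (X : Type) (d : X → X → ℝ),
        (∀ a b : X, d a b = 0 ↔ a = b) →
        (∀ a b : X, d a b = d b a) →
        (∀ a b c : X, d a c ≤ d a b + d b c) →
        (∀ a b : X, d a b ∈ A) →
        ∀ a b c : X, d a b ≤ max (d a c) (d c b)) ↔
    (∀ r ∈ A, ∀ r' ∈ A, r < r' → 2 * r < r') := by
  constructor
  · intro H r hr r' hr' hlt
    by_contra! hle
    have hpos : 0 < r := by linarith
    have hultra := H (Fin 3) (isoscelesDist r r')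
      (isoscelesDist_eq_zero_iff hpos.ne' (by linarith)) isoscelesDist_comm
      (isoscelesDist_triangle hpos.le (by linarith) hle) (isoscelesDist_mem h0 hr hr') 0 1 2
    have : r' ≤ r := by simpa [isoscelesDist] using hultra
    linarith
  · intro H X d _ _ htri hA a b c
    exact WellSpaced.le_max H (hA a b) (hA a c) (hA c b) (htri a c b)

/-- Every metric space realizing only distances in `A` is ultrametric iff `A`
is well-spaced (`r < r'` implies `2r < r'` for `r, r' ∈ A`). -/
theorem stmt_19 (A : Set ℝ) (h0 : (0:ℝ) ∈ A) (hnn : ∀ r ∈ A, 0 ≤ r) :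
    (∀ (X : Type) (d : X → X → ℝ),
        (∀ a b : X, d a b = 0 ↔ a = b) →
        (∀ a b : X, d a b = d b a) →
        (∀ a b c : X, d a c ≤ d a b + d b c) →
        (∀ a b : X, d a b ∈ A) →
        ∀ a b c : X, d a b ≤ max (d a c) (d c b)) ↔
    (∀ r ∈ A, ∀ r' ∈ A, r < r' → 2 * r < r') :=
  stmt_19_general A h0
end
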